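/- arXiv:1612.03119 — 2 statements merged into one kernel-verified Lean document; each statement's English description precedes it below -/
import Mathlib

section
/- Let n ≥ 3 be an integer, let δ > 0, and let q be a real number with q > n/(n−2). Then there exist constants c, C > 0 and ε₀ > 0 such that for all ε ∈ (0, ε₀): c · ε^{(2n−(n−2)q)/2} ≤ ∫_{B(0,δ)} u_ε(x)^q dx ≤ C · ε^{(2n−(n−2)q)/2}. -/
/-!
With `p = (n - 2) q / 2`, polar coordinates and the substitution `r = ε s` give
`∫_{B(0,δ)} u_ε^q = n |B(0,1)| ε^(n - p) ∫_0^(δ/ε) s^(n-1) (1 + s²)^(-p) ds`.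
For `ε ≤ 1` the truncated integral lies between its value at `δ/ε = δ` and the integral over
`(0, ∞)`, which is finite because the integrand decays like `s^(n-1-2p)` and `n < 2p` is exactly
`q > n/(n-2)`.
-/

open MeasureTheory Set Metric

theorem integral_ball_fun_norm (n : ℕ) [NeZero n] (f : ℝ → ℝ) {δ : ℝ} (hδ : 0 ≤ δ) :
    ∫ x in ball (0 : EuclideanSpace ℝ (Fin n)) δ, f ‖x‖ =
      n * volume.real (ball (0 : EuclideanSpace ℝ (Fin n)) 1) *
        ∫ r in 0..δ, r ^ (n - 1) * f r := by
  have hind : ∀ x : EuclideanSpace ℝ (Fin n),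
      (ball 0 δ).indicator (fun x => f ‖x‖) x = (Iio δ).indicator f ‖x‖ := fun x => by
    simp [indicator]
  rw [← integral_indicator measurableSet_ball, funext hind,
    integral_fun_norm_addHaar volume ((Iio δ).indicator f)]
  simp only [finrank_euclideanSpace, Fintype.card_fin, nsmul_eq_mul, smul_eq_mul, mul_assoc]
  simp_rw [← indicator_mul_right (Iio δ) (fun r : ℝ => r ^ (n - 1)) f]
  rw [integral_indicator measurableSet_Iio, Measure.restrict_restrict measurableSet_Iio,
    inter_comm, Ioi_inter_Iio, ← integral_Ioc_eq_integral_Ioo,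
    intervalIntegral.integral_of_le hδ]

noncomputable def bubbleRadialProfile (n : ℕ) (p s : ℝ) : ℝ := s ^ (n - 1) * (1 + s ^ 2) ^ (-p)

section BubbleRadialProfile

variable {n : ℕ} {p : ℝ}

theorem continuous_bubbleRadialProfile : Continuous (bubbleRadialProfile n p) :=
  (continuous_pow _).mul <| (by fun_prop : Continuous fun s : ℝ => 1 + s ^ 2).rpow_const
    fun s => Or.inl (by positivity)

theorem bubbleRadialProfile_pos {s : ℝ} (hs : 0 < s) : 0 < bubbleRadialProfile n p s := by
  unfold bubbleRadialProfile; positivity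

theorem bubbleRadialProfile_le_rpow (hn : 1 ≤ n) (hp : 0 ≤ p) {s : ℝ} (hs : 0 < s) :
    bubbleRadialProfile n p s ≤ s ^ ((n : ℝ) - 1 - 2 * p) := by
  have hpow : s ^ (n - 1) = s ^ ((n : ℝ) - 1) := by
    rw [← Real.rpow_natCast, Nat.cast_sub hn, Nat.cast_one]
  have hsq : (s ^ 2) ^ (-p) = s ^ (-(2 * p)) := by
    rw [← Real.rpow_natCast s 2, ← Real.rpow_mul hs.le]; norm_num
  calc bubbleRadialProfile n p s ≤ s ^ (n - 1) * (s ^ 2) ^ (-p) := by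
        unfold bubbleRadialProfile
        gcongr ?_ * ?_
        exact Real.rpow_le_rpow_of_nonpos (by positivity) (by linarith) (by linarith)
    _ = s ^ ((n : ℝ) - 1 - 2 * p) := by
        rw [hpow, hsq, ← Real.rpow_add hs]; ring_nf

theorem integrableOn_bubbleRadialProfile (hn : 1 ≤ n) (hp : (n : ℝ) < 2 * p) :
    IntegrableOn (bubbleRadialProfile n p) (Ioi 0) := by
  have hp0 : 0 ≤ p := by linarith [Nat.cast_nonneg (α := ℝ) n]
  rw [← Ioc_union_Ioi_eq_Ioi zero_le_one]
  refine .union ?_ ?_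
  · exact (continuous_bubbleRadialProfile.integrableOn_Icc).mono_set Ioc_subset_Icc_self
  · refine (integrableOn_Ioi_rpow_of_lt (a := (n : ℝ) - 1 - 2 * p) (by linarith) one_pos).mono'
      continuous_bubbleRadialProfile.aestronglyMeasurable.restrict ?_
    filter_upwards [ae_restrict_mem measurableSet_Ioi] with s (hs : 1 < s)
    rw [Real.norm_of_nonneg (bubbleRadialProfile_pos (by linarith)).le]
    exact bubbleRadialProfile_le_rpow hn hp0 (by linarith)

theorem intervalIntegral_bubbleRadialProfile_pos {T : ℝ} (hT : 0 < T) :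
    0 < ∫ s in 0..T, bubbleRadialProfile n p s :=
  intervalIntegral.intervalIntegral_pos_of_pos_on
    (continuous_bubbleRadialProfile.intervalIntegrable 0 T)
    (fun _ hs => bubbleRadialProfile_pos hs.1) hT

theorem intervalIntegral_bubbleRadialProfile_mono {a b : ℝ} (ha : 0 ≤ a) (hab : a ≤ b) :
    ∫ s in 0..a, bubbleRadialProfile n p s ≤ ∫ s in 0..b, bubbleRadialProfile n p s :=
  intervalIntegral.integral_mono_interval le_rfl ha hab
    ((ae_restrict_mem measurableSet_Ioc).mono fun _ hs => (bubbleRadialProfile_pos hs.1).le)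
    (continuous_bubbleRadialProfile.intervalIntegrable 0 b)

theorem intervalIntegral_bubbleRadialProfile_le_integral_Ioi (hn : 1 ≤ n)
    (hp : (n : ℝ) < 2 * p) {b : ℝ} (hb : 0 ≤ b) :
    ∫ s in 0..b, bubbleRadialProfile n p s ≤ ∫ s in Ioi 0, bubbleRadialProfile n p s := by
  rw [intervalIntegral.integral_of_le hb]
  exact setIntegral_mono_set (integrableOn_bubbleRadialProfile hn hp)
    ((ae_restrict_mem measurableSet_Ioi).mono fun _ hs => (bubbleRadialProfile_pos hs).le)
    Ioc_subset_Ioi_self.eventuallyLE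

end BubbleRadialProfile

theorem pow_mul_rpow_div_sq_add_sq_eq_bubbleRadialProfile (n : ℕ) (hn : 1 ≤ n) (p : ℝ) {ε : ℝ}
    (hε : 0 < ε) (r : ℝ) :
    r ^ (n - 1) * (ε / (ε ^ 2 + r ^ 2)) ^ p =
      ε ^ ((n : ℝ) - 1 - p) * bubbleRadialProfile n p (r / ε) := by
  have hbase : ε / (ε ^ 2 + r ^ 2) = (ε * (1 + (r / ε) ^ 2))⁻¹ := by field_simp
  have hεpow : ε ^ ((n : ℝ) - 1 - p) = ε ^ (n - 1) * ε ^ (-p) := by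
    rw [sub_eq_add_neg _ p, Real.rpow_add hε, ← Nat.cast_one, ← Nat.cast_sub hn,
      Real.rpow_natCast]
  rw [hbase, Real.inv_rpow (by positivity), Real.mul_rpow hε.le (by positivity), hεpow,
    bubbleRadialProfile, div_pow r ε (n - 1), Real.rpow_neg hε.le, Real.rpow_neg (by positivity)]
  field_simp

theorem intervalIntegral_pow_mul_rpow_div_sq_add_sq (n : ℕ) (hn : 1 ≤ n) (p : ℝ) {ε : ℝ}
    (hε : 0 < ε) (δ : ℝ) :
    ∫ r in 0..δ, r ^ (n - 1) * (ε / (ε ^ 2 + r ^ 2)) ^ p =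
      ε ^ ((n : ℝ) - p) * ∫ s in 0..δ / ε, bubbleRadialProfile n p s := by
  simp_rw [pow_mul_rpow_div_sq_add_sq_eq_bubbleRadialProfile n hn p hε]
  rw [intervalIntegral.integral_const_mul, intervalIntegral.integral_comp_div _ hε.ne',
    zero_div, smul_eq_mul, ← mul_assoc, ← Real.rpow_add_one hε.ne']
  ring_nf

theorem integral_ball_rpow_div_sq_add_sq (n : ℕ) [NeZero n] (p : ℝ) {δ ε : ℝ} (hδ : 0 ≤ δ)
    (hε : 0 < ε) :
    ∫ x in ball (0 : EuclideanSpace ℝ (Fin n)) δ, (ε / (ε ^ 2 + ‖x‖ ^ 2)) ^ p =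
      n * volume.real (ball (0 : EuclideanSpace ℝ (Fin n)) 1) *
        (ε ^ ((n : ℝ) - p) * ∫ s in 0..δ / ε, bubbleRadialProfile n p s) := by
  rw [integral_ball_fun_norm n (fun t => (ε / (ε ^ 2 + t ^ 2)) ^ p) hδ,
    intervalIntegral_pow_mul_rpow_div_sq_add_sq n NeZero.one_le p hε δ]

theorem integral_ball_bubble_rpow (n : ℕ) [NeZero n] (q : ℝ) {δ ε : ℝ} (hδ : 0 ≤ δ)
    (hε : 0 < ε) :
    ∫ x in ball (0 : EuclideanSpace ℝ (Fin n)) δ,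
        ((ε / (ε ^ 2 + ‖x‖ ^ 2)) ^ (((n : ℝ) - 2) / 2)) ^ q =
      n * volume.real (ball (0 : EuclideanSpace ℝ (Fin n)) 1) *
        (∫ s in 0..δ / ε, bubbleRadialProfile n (((n : ℝ) - 2) / 2 * q) s) *
          ε ^ ((2 * (n : ℝ) - ((n : ℝ) - 2) * q) / 2) := by
  have hpow : ∀ x : EuclideanSpace ℝ (Fin n),
      ((ε / (ε ^ 2 + ‖x‖ ^ 2)) ^ (((n : ℝ) - 2) / 2)) ^ q =
        (ε / (ε ^ 2 + ‖x‖ ^ 2)) ^ (((n : ℝ) - 2) / 2 * q) :=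
    fun x => (Real.rpow_mul (by positivity) _ _).symm
  simp_rw [hpow]
  rw [integral_ball_rpow_div_sq_add_sq n _ hδ hε]
  ring_nf

/-- Supercritical estimate for the standard bubble `u_ε(x) = (ε/(ε²+|x|²))^{(n-2)/2}`:
for `q > n/(n-2)` one has `∫_{B(0,δ)} u_ε^q ≍ ε^{(2n-(n-2)q)/2}` for small `ε`. -/
theorem bubble_integral_supercritical (n : ℕ) (hn : 3 ≤ n) (δ : ℝ) (hδ : 0 < δ)
    (q : ℝ) (hq : (n : ℝ) / ((n : ℝ) - 2) < q) :
    ∃ c C ε₀ : ℝ, 0 < c ∧ 0 < C ∧ 0 < ε₀ ∧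
      ∀ ε : ℝ, 0 < ε → ε < ε₀ →
        c * ε ^ ((2 * (n : ℝ) - ((n : ℝ) - 2) * q) / 2) ≤
          (∫ x in Metric.ball (0 : EuclideanSpace ℝ (Fin n)) δ,
            ((ε / (ε ^ 2 + ‖x‖ ^ 2)) ^ (((n : ℝ) - 2) / 2)) ^ q) ∧
        (∫ x in Metric.ball (0 : EuclideanSpace ℝ (Fin n)) δ,
            ((ε / (ε ^ 2 + ‖x‖ ^ 2)) ^ (((n : ℝ) - 2) / 2)) ^ q) ≤
          C * ε ^ ((2 * (n : ℝ) - ((n : ℝ) - 2) * q) / 2) := by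
  have : NeZero n := ⟨by omega⟩
  have hp : (n : ℝ) < 2 * (((n : ℝ) - 2) / 2 * q) := by
    have hn2 : (0 : ℝ) < n - 2 := by
      have : (3 : ℝ) ≤ n := by exact_mod_cast hn
      linarith
    linarith [(div_lt_iff₀ hn2).1 hq]
  set p := ((n : ℝ) - 2) / 2 * q
  set A := n * volume.real (ball (0 : EuclideanSpace ℝ (Fin n)) 1)
  have hA : 0 < A := mul_pos (by simp [Nat.pos_of_neZero]) <|
    ENNReal.toReal_pos (measure_ball_pos volume _ one_pos).ne' measure_ball_lt_top.ne
  refine ⟨A * ∫ s in 0..δ, bubbleRadialProfile n p s,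
    A * ∫ s in Ioi 0, bubbleRadialProfile n p s, 1,
    mul_pos hA (intervalIntegral_bubbleRadialProfile_pos hδ), ?_, one_pos, fun ε hε hε1 => ?_⟩
  · exact mul_pos hA <| (intervalIntegral_bubbleRadialProfile_pos hδ).trans_le
      (intervalIntegral_bubbleRadialProfile_le_integral_Ioi NeZero.one_le hp hδ.le)
  have hδε : δ ≤ δ / ε := (le_div_iff₀ hε).2 (by nlinarith)
  rw [integral_ball_bubble_rpow n q hδ.le hε]
  constructor
  · gcongr
    exact intervalIntegral_bubbleRadialProfile_mono hδ.le hδε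
  · gcongr
    exact intervalIntegral_bubbleRadialProfile_le_integral_Ioi NeZero.one_le hp (by positivity)
end

section
/- Let n, ω, k be positive integers with 2 ≤ 2k ≤ ω and 2ω ≤ n − 6. Define the real numbers ν_k := (ω − 2k + 2)(n + ω − 2k), d_k := 4·[(n−1)(n−2)ν_k − n(n−2)² + (ω+2)²(n² + n + 2)], and e_k := ( (n−3)/(4(n−2)) − ((n−1)² + (n−1)(ω+2)²)/(4(n−2)(ν_k − n + 1)) ) · ν_k. Then ν_k > n − 1, d_k > 0, and e_k − (n−2)² ν_k² / d_k < 0; equivalently, setting c_k := −(n−2)² ν_k / d_k, the quantity e_k (n−2)² + d_k c_k² + 2(n−2)² c_k ν_k is negative. -/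
set_option maxHeartbeats 2000000 in
/-- Negativity of the coefficient `e_k (n-2)² + d_k c_k² + 2 (n-2)² c_k ν_k` for the
choice `c_k = -(n-2)² ν_k / d_k` in the test-function computation, in the range
`1 ≤ k`, `2k ≤ ω`, `2ω ≤ n - 6`. -/
theorem test_function_coefficient_negative (n ω k : ℕ)
    (hn : 0 < n) (hω : 0 < ω) (hk : 0 < k)
    (hkω : 2 * k ≤ ω) (hωn : 2 * ω + 6 ≤ n)
    (ν d e c : ℝ)
    (hν : ν = ((ω : ℝ) - 2 * k + 2) * ((n : ℝ) + ω - 2 * k))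
    (hd : d = 4 * (((n : ℝ) - 1) * ((n : ℝ) - 2) * ν - (n : ℝ) * ((n : ℝ) - 2) ^ 2
      + ((ω : ℝ) + 2) ^ 2 * ((n : ℝ) ^ 2 + (n : ℝ) + 2)))
    (he : e = (((n : ℝ) - 3) / (4 * ((n : ℝ) - 2))
      - (((n : ℝ) - 1) ^ 2 + ((n : ℝ) - 1) * ((ω : ℝ) + 2) ^ 2)
          / (4 * ((n : ℝ) - 2) * (ν - (n : ℝ) + 1))) * ν)
    (hc : c = -((n : ℝ) - 2) ^ 2 * ν / d) :
    ν > (n : ℝ) - 1 ∧ d > 0 ∧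
      e - ((n : ℝ) - 2) ^ 2 * ν ^ 2 / d < 0 ∧
      e * ((n : ℝ) - 2) ^ 2 + d * c ^ 2 + 2 * ((n : ℝ) - 2) ^ 2 * c * ν < 0 := by
  have hw2 : 2 ≤ ω := le_trans (by omega) hkω
  have hn10 : 10 ≤ n := by omega
  have hxR : (10:ℝ) ≤ (n:ℝ) := by exact_mod_cast hn10
  have hwR : (2:ℝ) ≤ (ω:ℝ) := by exact_mod_cast hw2
  have hkR : 2 * (k:ℝ) ≤ (ω:ℝ) := by exact_mod_cast hkω
  have hwnR : 2 * (ω:ℝ) + 6 ≤ (n:ℝ) := by exact_mod_cast hωn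
  have ha0 : (0:ℝ) ≤ (ω:ℝ) - 2 * k := by linarith
  -- ν ≥ 2n
  have hν2 : 2 * (n:ℝ) ≤ ν := by
    rw [hν]
    nlinarith [mul_nonneg ha0 (by linarith : (0:ℝ) ≤ (n:ℝ) + (ω:ℝ) - 2*k + 2)]
  have h1 : ν > (n:ℝ) - 1 := by linarith
  set x : ℝ := (n:ℝ) with hxdef
  set B : ℝ := ((ω:ℝ) + 2) ^ 2 with hBdef
  have hB1 : (16:ℝ) ≤ B := by nlinarith
  have hB2 : 4 * B ≤ (x - 2) ^ 2 := by nlinarith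
  have hd0 : d > 0 := by
    rw [hd]
    nlinarith [mul_nonneg (mul_nonneg (by linarith : (0:ℝ) ≤ x - 1)
      (by linarith : (0:ℝ) ≤ x - 2)) (by linarith : (0:ℝ) ≤ ν - 2*x)]
  set m : ℝ := ν - x + 1 with hmdef
  have hm1 : x + 1 ≤ m := by simp only [hmdef]; linarith
  have hm0 : (0:ℝ) < m := by linarith
  have hν0 : (0:ℝ) < ν := by linarith
  have hνm : ν = m + x - 1 := by rw [hmdef]; ring
  have hx2 : (0:ℝ) < x - 2 := by linarith
  have hs : (0:ℝ) ≤ x - 10 := by linarith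
  have hu : (0:ℝ) ≤ m - x - 1 := by linarith
  -- discriminant inequality (B-free)
  have key2 : ((((x-3)*m - (x-1)^2) * (x^2+x+2) - (x-1) * ((x-1)*(x-2)*(m+x-1) - x*(x-2)^2))^2
      < 4 * (x-1) * (x^2+x+2) * ((x-2)^3*(m+x-1)*m
        - ((x-3)*m - (x-1)^2) * ((x-1)*(x-2)*(m+x-1) - x*(x-2)^2))) := by
    have hid : 4 * (x-1) * (x^2+x+2) * ((x-2)^3*(m+x-1)*m
          - ((x-3)*m - (x-1)^2) * ((x-1)*(x-2)*(m+x-1) - x*(x-2)^2))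
        - ((((x-3)*m - (x-1)^2) * (x^2+x+2) - (x-1) * ((x-1)*(x-2)*(m+x-1) - x*(x-2)^2))^2)
        = 408574976 + 44658176*(m-x-1) + 13760*(m-x-1)^2 + 351366144*(x-10)
          + 34013184*(x-10)*(m-x-1) + 4416*(x-10)*(m-x-1)^2 + 131997184*(x-10)^2
          + 11100096*(x-10)^2*(m-x-1) + 464*(x-10)^2*(m-x-1)^2 + 28293952*(x-10)^3
          + 2011856*(x-10)^3*(m-x-1) + 16*(x-10)^3*(m-x-1)^2 + 3785152*(x-10)^4
          + 218692*(x-10)^4*(m-x-1) + 323632*(x-10)^5 + 14256*(x-10)^5*(m-x-1)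
          + 17271*(x-10)^6 + 516*(x-10)^6*(m-x-1) + 526*(x-10)^7
          + 8*(x-10)^7*(m-x-1) + 7*(x-10)^8 := by ring
    linarith [hid, hu, pow_nonneg hu 2, hs, mul_nonneg (hs) (hu),
      mul_nonneg (hs) (pow_nonneg hu 2), pow_nonneg hs 2,
      mul_nonneg (pow_nonneg hs 2) (hu), mul_nonneg (pow_nonneg hs 2) (pow_nonneg hu 2),
      pow_nonneg hs 3, mul_nonneg (pow_nonneg hs 3) (hu),
      mul_nonneg (pow_nonneg hs 3) (pow_nonneg hu 2), pow_nonneg hs 4,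
      mul_nonneg (pow_nonneg hs 4) (hu), pow_nonneg hs 5,
      mul_nonneg (pow_nonneg hs 5) (hu), pow_nonneg hs 6,
      mul_nonneg (pow_nonneg hs 6) (hu), pow_nonneg hs 7,
      mul_nonneg (pow_nonneg hs 7) (hu), pow_nonneg hs 8]
  -- main numerator inequality H < 0
  have hH : ((x-3)*m - ((x-1)^2 + (x-1)*B)) * d - 4*(x-2)^3*ν*m < 0 := by
    have hR0 : (0:ℝ) < 4 * (x-1) * (x^2+x+2) := by nlinarith
    have hsq := sq_nonneg (2*(x-1)*(x^2+x+2)*B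
      - (((x-3)*m - (x-1)^2) * (x^2+x+2) - (x-1) * ((x-1)*(x-2)*(m+x-1) - x*(x-2)^2)))
    have hfac : 4 * (x-1) * (x^2+x+2) *
        ((((x-3)*m - ((x-1)^2 + (x-1)*B)) * d - 4*(x-2)^3*ν*m)) < 0 := by
      rw [hd, hνm]
      linarith [key2, hsq]
    by_contra hcon
    push_neg at hcon
    linarith [mul_nonneg (le_of_lt hR0) hcon]
  -- third conjunct
  have heq3 : e - (x-2)^2 * ν^2 / d
      = ν * (((x-3)*m - ((x-1)^2 + (x-1)*B)) * d - 4*(x-2)^3*ν*m)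
        / (4*(x-2)*m*d) := by
    rw [he]
    field_simp
  have h3 : e - (x-2)^2 * ν^2 / d < 0 := by
    rw [heq3]
    apply div_neg_of_neg_of_pos
    · exact mul_neg_of_pos_of_neg hν0 hH
    · positivity
  refine ⟨h1, hd0, h3, ?_⟩
  have heq4 : e * (x-2)^2 + d * c^2 + 2*(x-2)^2*c*ν
      = (x-2)^2 * (e - (x-2)^2 * ν^2 / d) := by
    rw [hc]
    field_simp
    ring
  rw [heq4]
  exact mul_neg_of_pos_of_neg (by positivity) h3
end
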